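/- Let N ≥ 1 and T ≥ 2 be integers and consider panel data Y_{i,t} = μ_i + e_{i,t}, i = 1,…,N, t = 1,…,T (no change in the mean), where each μ_i is a real constant and the random variables e_{i,t} are mutually independent across all (i,t), with e_{i,t} distributed as a centered Gaussian with variance σ_i² > 0 for every t. Let w_1,…,w_{T−1} be nonnegative weights, not all zero, and define κ̂²_{N,T}(w) = (1/3)·( Σ_{k=1}^{T−1} m_T(k/T)⁴ w_k )^{−1} · Σ_{k=1}^{T−1} m_T(k/T)² w_k · z̈_k, where z̈_k = N^{−1} Σ_{i=1}^N Z_i(k/T)⁴ and Z_i is the CUSUM process of panel i. Then E[ κ̂²_{N,T}(w) ] = N^{−1} Σ_{i=1}^N σ_i⁴, i.e., κ̂²_{N,T}(w) is an exactly unbiased estimator of κ̄_N² = N^{−1} Σ_{i=1}^N σ_i⁴ under the null hypothesis of no change. -/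

import Mathlib

/-!
Since `∑ₜ (1{t ≤ k} - k/T) = 0`, the CUSUM `Z_i(k/T)` equals
`T^{-1/2} ∑ₜ (1{t ≤ k} - k/T) e_{i,t}`, in which the mean `μ_i` has cancelled. As a linear
combination of independent centred Gaussians it is a centred Gaussian, of variance
`σ_i² T⁻¹ ∑ₜ (1{t ≤ k} - k/T)² = σ_i² m(k/T)`. Its fourth moment `3 σ_i⁴ m(k/T)²` is the
fourth derivative at `0` of the moment generating function `exp (σ_i² t² / 2)`. By linearity,
`E κ̂² = (1/3) (∑ₖ m⁴ wₖ)⁻¹ ∑ₖ m² wₖ · 3 m² · N⁻¹ ∑ᵢ σ_i⁴ = N⁻¹ ∑ᵢ σ_i⁴`.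
-/

open MeasureTheory ProbabilityTheory

/-- `m(s) = s(1-s)`. Note that `m_T(k/T) = m(k/T)` for integers `1 ≤ k ≤ T-1`. -/
noncomputable def m (s : ℝ) : ℝ := s * (1 - s)

/-- CUSUM process of the data `Y 1, …, Y T`:
`Z(s) = T^{-1/2} ∑_{k=1}^{⌊Ts⌋} (Y k - Ȳ_T)`. -/
noncomputable def cusum (T : ℕ) (Y : ℕ → ℝ) (s : ℝ) : ℝ :=
  (Real.sqrt T)⁻¹ * ∑ k ∈ Finset.Icc 1 (⌊(T : ℝ) * s⌋.toNat),
    (Y k - (T : ℝ)⁻¹ * ∑ t ∈ Finset.Icc 1 T, Y t)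

open Finset Real
open scoped NNReal

theorem Finset.Icc_filter_le_of_le_right {α : Type*} [Preorder α] [LocallyFiniteOrder α]
    {a b c : α} [DecidablePred (· ≤ c)] (hcb : c ≤ b) :
    {x ∈ Icc a b | x ≤ c} = Icc a c := by
  ext x
  simp only [mem_filter, mem_Icc]
  exact ⟨fun h ↦ ⟨h.1.1, h.2⟩, fun h ↦ ⟨⟨h.1, h.2.trans hcb⟩, h.2⟩⟩

lemma hasDerivAt_mul_exp_mul_sq_div_two {p : ℝ → ℝ} {p' : ℝ} (a t : ℝ) (hp : HasDerivAt p p' t) :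
    HasDerivAt (fun t ↦ p t * rexp (a * t ^ 2 / 2))
      ((p' + a * t * p t) * rexp (a * t ^ 2 / 2)) t := by
  have h : HasDerivAt (fun t ↦ a * t ^ 2 / 2) (a * t) t :=
    (((hasDerivAt_pow 2 t).const_mul a).div_const 2).congr_deriv (by ring)
  exact (hp.mul h.exp).congr_deriv (by ring)

lemma iteratedDeriv_four_exp_mul_sq_div_two_zero (a : ℝ) :
    iteratedDeriv 4 (fun t ↦ rexp (a * t ^ 2 / 2)) 0 = 3 * a ^ 2 := by
  have step (p p' q : ℝ → ℝ) (hp : ∀ t, HasDerivAt p (p' t) t)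
      (hq : ∀ t, p' t + a * t * p t = q t) :
      deriv (fun t ↦ p t * rexp (a * t ^ 2 / 2)) = fun t ↦ q t * rexp (a * t ^ 2 / 2) :=
    funext fun t ↦ (hasDerivAt_mul_exp_mul_sq_div_two a t (hp t)).deriv.trans (by rw [hq])
  have d1 : deriv (fun t ↦ rexp (a * t ^ 2 / 2)) = fun t ↦ a * t * rexp (a * t ^ 2 / 2) := by
    simpa using step (fun _ ↦ 1) (fun _ ↦ 0) (fun t ↦ a * t) (fun t ↦ hasDerivAt_const t 1)
      (fun t ↦ by ring)
  have d2 := step (fun t ↦ a * t) (fun _ ↦ a) (fun t ↦ a + a ^ 2 * t ^ 2)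
    (fun t ↦ by simpa using (hasDerivAt_id t).const_mul a) (fun t ↦ by ring)
  have d3 := step (fun t ↦ a + a ^ 2 * t ^ 2) (fun t ↦ 2 * a ^ 2 * t)
    (fun t ↦ 3 * a ^ 2 * t + a ^ 3 * t ^ 3)
    (fun t ↦ (((hasDerivAt_pow 2 t).const_mul (a ^ 2)).const_add a).congr_deriv (by ring))
    (fun t ↦ by ring)
  have d4 := step (fun t ↦ 3 * a ^ 2 * t + a ^ 3 * t ^ 3) (fun t ↦ 3 * a ^ 2 + 3 * a ^ 3 * t ^ 2)
    (fun t ↦ 3 * a ^ 2 + 6 * a ^ 3 * t ^ 2 + a ^ 4 * t ^ 4)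
    (fun t ↦ (((hasDerivAt_id t).const_mul (3 * a ^ 2)).add
      ((hasDerivAt_pow 3 t).const_mul (a ^ 3))).congr_deriv (by simp; ring))
    (fun t ↦ by ring)
  rw [iteratedDeriv_succ, iteratedDeriv_succ, iteratedDeriv_succ, iteratedDeriv_one,
    d1, d2, d3, d4]
  simp

namespace ProbabilityTheory

lemma integral_pow_four_gaussianReal (v : ℝ≥0) :
    ∫ x, x ^ 4 ∂gaussianReal 0 v = 3 * (v : ℝ) ^ 2 := by
  have h := iteratedDeriv_mgf_zero (X := fun x : ℝ ↦ x) (μ := gaussianReal 0 v) (by simp) 4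
  rw [mgf_fun_id_gaussianReal] at h
  simp only [zero_mul, zero_add] at h
  rw [iteratedDeriv_four_exp_mul_sq_div_two_zero] at h
  exact h.symm

lemma integrable_pow_gaussianReal (μ : ℝ) (v : ℝ≥0) (n : ℕ) :
    Integrable (fun x ↦ x ^ n) (gaussianReal μ v) :=
  integrable_pow_of_integrable_exp_mul one_ne_zero (integrable_exp_mul_gaussianReal 1)
    (integrable_exp_mul_gaussianReal (-1)) n

variable {Ω : Type*} [MeasurableSpace Ω] {P : Measure Ω}

lemma HasLaw.integrable_pow_of_gaussianReal {X : Ω → ℝ} {μ : ℝ} {v : ℝ≥0}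
    (hX : HasLaw X (gaussianReal μ v) P) (n : ℕ) : Integrable (fun ω ↦ X ω ^ n) P :=
  (integrable_map_measure (continuous_pow n).aestronglyMeasurable hX.aemeasurable).1
    (hX.map_eq ▸ integrable_pow_gaussianReal μ v n)

lemma HasLaw.integral_pow_four_of_gaussianReal {X : Ω → ℝ} {v : ℝ≥0}
    (hX : HasLaw X (gaussianReal 0 v) P) : ∫ ω, X ω ^ 4 ∂P = 3 * (v : ℝ) ^ 2 :=
  (hX.integral_comp (f := fun x ↦ x ^ 4) (by fun_prop)).trans (integral_pow_four_gaussianReal v)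

lemma iIndepFun.hasLaw_sum_gaussianReal [IsProbabilityMeasure P] {ι : Type*} {X : ι → Ω → ℝ}
    {μ : ι → ℝ} {v : ι → ℝ≥0} (hindep : iIndepFun X P)
    (hX : ∀ i, HasLaw (X i) (gaussianReal (μ i) (v i)) P) (s : Finset ι) :
    HasLaw (∑ i ∈ s, X i) (gaussianReal (∑ i ∈ s, μ i) (∑ i ∈ s, v i)) P := by
  classical
  induction s using Finset.induction_on with
  | empty => simpa [gaussianReal_zero_var] using hasLaw_dirac_of_ae_eq (x := (0 : ℝ)) (by rfl)
  | insert i s hi ih =>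
    rw [sum_insert hi, sum_insert hi, sum_insert hi, add_comm (X i), add_comm (μ i),
      add_comm (v i)]
    exact ⟨ih.aemeasurable.add (hX i).aemeasurable,
      gaussianReal_add_gaussianReal_of_indepFun
        (hindep.indepFun_finsetSum_of_notMem₀ (fun j ↦ (hX j).aemeasurable) hi)
        ih.map_eq (hX i).map_eq⟩

lemma iIndepFun.row {α β γ : Type*} [MeasurableSpace γ] {s : Finset α} {t : Finset β}
    {f : α → β → Ω → γ} (h : iIndepFun (fun p : s ×ˢ t ↦ f (p : α × β).1 (p : α × β).2) P)
    {i : α} (hi : i ∈ s) : iIndepFun (fun j : t ↦ f i j) P :=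
  h.precomp (g := fun j : t ↦ (⟨(i, j), mem_product.2 ⟨hi, j.2⟩⟩ : s ×ˢ t))
    fun j j' h ↦ by simpa using h

end ProbabilityTheory

lemma m_natCast_div_nonneg {T k : ℕ} (hk : k ≤ T) : 0 ≤ m (k / T) :=
  mul_nonneg (div_nonneg k.cast_nonneg T.cast_nonneg)
    (sub_nonneg.2 (div_le_one_of_le₀ (Nat.cast_le.2 hk) T.cast_nonneg))

lemma m_natCast_div_pos {T k : ℕ} (hk₀ : 0 < k) (hkT : k < T) : 0 < m (k / T) :=
  mul_pos (div_pos (Nat.cast_pos.2 hk₀) (Nat.cast_pos.2 (hk₀.trans hkT)))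
    (sub_pos.2 ((div_lt_one (Nat.cast_pos.2 (hk₀.trans hkT))).2 (Nat.cast_lt.2 hkT)))

lemma sum_m_pow_mul_pos {T : ℕ} {w : ℕ → ℝ} (n : ℕ) (hw : ∀ k ∈ Icc 1 (T - 1), 0 ≤ w k)
    (hw0 : ∃ k ∈ Icc 1 (T - 1), w k ≠ 0) :
    0 < ∑ k ∈ Icc 1 (T - 1), m ((k : ℝ) / T) ^ n * w k := by
  refine sum_pos' (fun k hk ↦ mul_nonneg (pow_nonneg (m_natCast_div_nonneg ?_) n) (hw k hk)) ?_
  · grind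
  obtain ⟨k, hk, hwk⟩ := hw0
  have hk' := mem_Icc.1 hk
  exact ⟨k, hk, mul_pos (pow_pos (m_natCast_div_pos (by omega) (by omega)) n)
    ((hw k hk).lt_of_ne' hwk)⟩

noncomputable def cusumWeight (T k t : ℕ) : ℝ := (if t ≤ k then 1 else 0) - k / T

lemma cusum_const_add (T : ℕ) (a : ℝ) (Y : ℕ → ℝ) (s : ℝ) :
    cusum T (fun t ↦ a + Y t) s = cusum T Y s := by
  rcases eq_or_ne T 0 with rfl | hT
  · simp [cusum]
  have hmean : (T : ℝ)⁻¹ * ∑ t ∈ Icc 1 T, (a + Y t) = a + (T : ℝ)⁻¹ * ∑ t ∈ Icc 1 T, Y t := by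
    rw [sum_add_distrib, sum_const, Nat.card_Icc, Nat.add_sub_cancel, nsmul_eq_mul]
    field_simp
  simp only [cusum, hmean, add_sub_add_left_eq_sub]

lemma cusum_natCast_div {T k : ℕ} (hk : k ≤ T) (Y : ℕ → ℝ) :
    cusum T Y (k / T) = (√T)⁻¹ * ∑ t ∈ Icc 1 T, cusumWeight T k t * Y t := by
  rcases eq_or_ne T 0 with rfl | hT
  · simp [cusum]
  have hfloor : ⌊(T : ℝ) * (k / T)⌋.toNat = k := by
    rw [mul_div_cancel₀ _ (Nat.cast_ne_zero.2 hT), Int.floor_natCast, Int.toNat_natCast]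
  simp only [cusum, hfloor, cusumWeight, sub_mul, ite_mul, one_mul, zero_mul, sum_sub_distrib,
    ← sum_filter, Icc_filter_le_of_le_right hk, sum_const, Nat.card_Icc, Nat.add_sub_cancel,
    nsmul_eq_mul, ← mul_sum]
  ring

lemma sum_cusumWeight_sq {T k : ℕ} (hk : k ≤ T) :
    ∑ t ∈ Icc 1 T, cusumWeight T k t ^ 2 = T * m (k / T) := by
  rcases eq_or_ne T 0 with rfl | hT
  · simp
  have hsq (t : ℕ) : cusumWeight T k t ^ 2
      = (if t ≤ k then 1 else 0) * (1 - 2 * (k / T)) + (k / T : ℝ) ^ 2 := by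
    unfold cusumWeight
    split_ifs <;> ring
  simp only [hsq, sum_add_distrib, ← sum_mul, ← sum_filter, Icc_filter_le_of_le_right hk,
    sum_const, Nat.card_Icc, Nat.add_sub_cancel, nsmul_eq_mul, mul_one, m]
  field_simp
  ring

section Panel

variable {Ω : Type*} [MeasurableSpace Ω] {P : Measure Ω} [IsProbabilityMeasure P] {T k : ℕ}
  {e : ℕ → Ω → ℝ} {σ2 : ℝ≥0}

lemma hasLaw_cusum_gaussianReal (hindep : iIndepFun (fun t : Icc 1 T ↦ e t) P)
    (hlaw : ∀ t ∈ Icc 1 T, HasLaw (e t) (gaussianReal 0 σ2) P) (hk : k ≤ T) :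
    HasLaw (fun ω ↦ cusum T (fun t ↦ e t ω) (k / T))
      (gaussianReal 0 (σ2 * (m (k / T)).toNNReal)) P := by
  have hX (t : Icc 1 T) := gaussianReal_const_mul (hlaw t t.2) (cusumWeight T k t)
  have hsum := gaussianReal_const_mul
    ((hindep.comp (fun t x ↦ cusumWeight T k t * x) fun _ ↦ by fun_prop).hasLaw_sum_gaussianReal
      hX univ) (√T)⁻¹
  convert hsum using 2 with ω
  · rw [cusum_natCast_div hk, ← sum_coe_sort (Icc 1 T), Finset.sum_apply]
    rfl
  · simp
  · ext
    rcases eq_or_ne T 0 with rfl | hT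
    · simp [m]
    push_cast
    rw [← sum_mul, sum_coe_sort (Icc 1 T) (fun t ↦ cusumWeight T k t ^ 2), sum_cusumWeight_sq hk,
      Real.coe_toNNReal _ (m_natCast_div_nonneg hk), inv_pow, sq_sqrt T.cast_nonneg]
    field_simp

lemma integrable_cusum_pow (hindep : iIndepFun (fun t : Icc 1 T ↦ e t) P)
    (hlaw : ∀ t ∈ Icc 1 T, HasLaw (e t) (gaussianReal 0 σ2) P) (hk : k ≤ T) (n : ℕ) :
    Integrable (fun ω ↦ cusum T (fun t ↦ e t ω) (k / T) ^ n) P :=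
  (hasLaw_cusum_gaussianReal hindep hlaw hk).integrable_pow_of_gaussianReal n

lemma integral_cusum_pow_four (hindep : iIndepFun (fun t : Icc 1 T ↦ e t) P)
    (hlaw : ∀ t ∈ Icc 1 T, HasLaw (e t) (gaussianReal 0 σ2) P) (hk : k ≤ T) :
    ∫ ω, cusum T (fun t ↦ e t ω) (k / T) ^ 4 ∂P = 3 * (σ2 : ℝ) ^ 2 * m (k / T) ^ 2 := by
  rw [(hasLaw_cusum_gaussianReal hindep hlaw hk).integral_pow_four_of_gaussianReal,
    NNReal.coe_mul, Real.coe_toNNReal _ (m_natCast_div_nonneg hk)]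
  ring

end Panel

lemma integral_mul_sum_mul_sum {Ω ι κ : Type*} [MeasurableSpace Ω] {P : Measure Ω}
    (s : Finset ι) (t : Finset κ) (a c : ℝ) (b : ι → ℝ) (X : ι → κ → Ω → ℝ)
    (hX : ∀ k ∈ s, ∀ i ∈ t, Integrable (X k i) P) :
    ∫ ω, a * ∑ k ∈ s, b k * (c * ∑ i ∈ t, X k i ω) ∂P
      = a * ∑ k ∈ s, b k * (c * ∑ i ∈ t, ∫ ω, X k i ω ∂P) := by
  have hrow (k : ι) (hk : k ∈ s) : Integrable (fun ω ↦ ∑ i ∈ t, X k i ω) P :=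
    integrable_finsetSum _ (hX k hk)
  rw [integral_const_mul, integral_finsetSum _ fun k hk ↦ ((hrow k hk).const_mul c).const_mul _]
  refine congrArg _ (sum_congr rfl fun k hk ↦ ?_)
  rw [integral_const_mul, integral_const_mul, integral_finsetSum _ (hX k hk)]

theorem stmt19_general {Ω : Type*} [MeasurableSpace Ω] (P : Measure Ω) [IsProbabilityMeasure P]
    (N T : ℕ)
    (μ : ℕ → ℝ) (v : ℕ → NNReal)
    (e : ℕ → ℕ → Ω → ℝ)
    (hmeas : ∀ i t, Measurable (e i t))
    (hindep : iIndepFun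
      (fun p : (Finset.Icc 1 N ×ˢ Finset.Icc 1 T) =>
        e (p : ℕ × ℕ).1 (p : ℕ × ℕ).2) P)
    (hgauss : ∀ i ∈ Finset.Icc 1 N, ∀ t ∈ Finset.Icc 1 T,
      Measure.map (e i t) P = gaussianReal 0 (v i))
    (Y : ℕ → ℕ → Ω → ℝ) (hY : ∀ i t ω, Y i t ω = μ i + e i t ω)
    (w : ℕ → ℝ) (hw : ∀ k ∈ Finset.Icc 1 (T - 1), 0 ≤ w k)
    (hw0 : ∃ k ∈ Finset.Icc 1 (T - 1), w k ≠ 0)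
    (κhat : Ω → ℝ)
    (hκhat : ∀ ω, κhat ω = (1 / 3) *
      (∑ k ∈ Finset.Icc 1 (T - 1), (m ((k : ℝ) / T)) ^ 4 * w k)⁻¹ *
      ∑ k ∈ Finset.Icc 1 (T - 1), (m ((k : ℝ) / T)) ^ 2 * w k *
        ((N : ℝ)⁻¹ * ∑ i ∈ Finset.Icc 1 N,
          (cusum T (fun t => Y i t ω) ((k : ℝ) / T)) ^ 4)) :
    ∫ ω, κhat ω ∂P = (N : ℝ)⁻¹ * ∑ i ∈ Finset.Icc 1 N, ((v i : ℝ)) ^ 2 := by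
  have hpanel (i : ℕ) (hi : i ∈ Icc 1 N) :
      iIndepFun (fun t : Icc 1 T ↦ e i t) P ∧
        ∀ t ∈ Icc 1 T, HasLaw (e i t) (gaussianReal 0 (v i)) P :=
    ⟨hindep.row hi, fun t ht ↦ ⟨(hmeas i t).aemeasurable, hgauss i hi t ht⟩⟩
  have hA := sum_m_pow_mul_pos 4 hw hw0
  have hterm : ∀ k ∈ Icc 1 (T - 1), m ((k : ℝ) / T) ^ 2 * w k *
      ((N : ℝ)⁻¹ * ∑ i ∈ Icc 1 N, ∫ ω, cusum T (fun t ↦ e i t ω) (k / T) ^ 4 ∂P)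
      = m ((k : ℝ) / T) ^ 4 * w k * (3 * ((N : ℝ)⁻¹ * ∑ i ∈ Icc 1 N, (v i : ℝ) ^ 2)) := by
    intro k hk
    rw [sum_congr rfl fun i hi ↦ integral_cusum_pow_four (hpanel i hi).1 (hpanel i hi).2
      (by grind), ← sum_mul, ← mul_sum]
    ring
  simp_rw [hκhat, hY, cusum_const_add]
  rw [integral_mul_sum_mul_sum _ _ _ _ _ _ fun k hk i hi ↦
      integrable_cusum_pow (hpanel i hi).1 (hpanel i hi).2 (by grind) 4,
    sum_congr rfl hterm, ← sum_mul]
  field_simp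

/-- Under the null hypothesis of no change, with mutually
independent centered Gaussian errors `e i t` of variance `σ_i² = v i > 0`, the
regression-based estimator `κ̂²_{N,T}(w)` is exactly unbiased for
`κ̄_N² = N⁻¹ ∑ σ_i⁴`. -/
theorem stmt19 {Ω : Type*} [MeasurableSpace Ω] (P : Measure Ω) [IsProbabilityMeasure P]
    (N T : ℕ) (hN : 1 ≤ N) (hT : 2 ≤ T)
    (μ : ℕ → ℝ) (v : ℕ → NNReal) (hv : ∀ i ∈ Finset.Icc 1 N, 0 < v i)
    (e : ℕ → ℕ → Ω → ℝ)
    (hmeas : ∀ i t, Measurable (e i t))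
    (hindep : iIndepFun
      (fun p : (Finset.Icc 1 N ×ˢ Finset.Icc 1 T) =>
        e (p : ℕ × ℕ).1 (p : ℕ × ℕ).2) P)
    (hgauss : ∀ i ∈ Finset.Icc 1 N, ∀ t ∈ Finset.Icc 1 T,
      Measure.map (e i t) P = gaussianReal 0 (v i))
    (Y : ℕ → ℕ → Ω → ℝ) (hY : ∀ i t ω, Y i t ω = μ i + e i t ω)
    (w : ℕ → ℝ) (hw : ∀ k ∈ Finset.Icc 1 (T - 1), 0 ≤ w k)
    (hw0 : ∃ k ∈ Finset.Icc 1 (T - 1), w k ≠ 0)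
    (κhat : Ω → ℝ)
    (hκhat : ∀ ω, κhat ω = (1 / 3) *
      (∑ k ∈ Finset.Icc 1 (T - 1), (m ((k : ℝ) / T)) ^ 4 * w k)⁻¹ *
      ∑ k ∈ Finset.Icc 1 (T - 1), (m ((k : ℝ) / T)) ^ 2 * w k *
        ((N : ℝ)⁻¹ * ∑ i ∈ Finset.Icc 1 N,
          (cusum T (fun t => Y i t ω) ((k : ℝ) / T)) ^ 4)) :
    ∫ ω, κhat ω ∂P = (N : ℝ)⁻¹ * ∑ i ∈ Finset.Icc 1 N, ((v i : ℝ)) ^ 2 :=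
  stmt19_general P N T μ v e hmeas hindep hgauss Y hY w hw hw0 κhat hκhat
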